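/- If (E,𝓔) is involutive, has a normal structure, and the restriction to X is a one-local retract of (E,𝓔), then the restriction to X has a normal structure. -/

import Mathlib

/-!
Replace a nonempty intersection of balls `A` of the restriction to `X` by its hull `cov 𝓔 A`,
the intersection of all balls of `E` containing `A`; it is itself an intersection of balls of `E`.
If `cov 𝓔 A` lies in a ball `ball r x`, a one-local retraction `h` fixing `X` sends `x` into every
ball of `X` containing `A`, hence into `A`, and `ball r (h x)` still contains `A`. So every radius
of the hull restricts to a radius, hence to a diameter, of `A`; by involutivity a diameter of `A` is
a diameter of its hull. The hull thus has equal radius and diameter sets, so it is a singleton by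
normality of `E`, and so is `A`.
-/

open Set

variable {E : Type*}

def ball (r : Set (E × E)) (x : E) : Set E := {y | (x, y) ∈ r}

def relInv (r : Set (E × E)) : Set (E × E) := {p | (p.2, p.1) ∈ r}

def center (A : Set E) (r : Set (E × E)) : Set E := {x | A ⊆ ball r x}

def ballsOf (𝓔 : Set (Set (E × E))) (G : Set E) : Set (Set E) :=
  {B | ∃ x ∈ G, ∃ r ∈ 𝓔, B = ball r x}

def interB (G : Set E) (𝓔 : Set (Set (E × E))) : Set (Set E) :=
  {B | ∃ S, S ⊆ ballsOf 𝓔 G ∧ B = G ∩ ⋂₀ S}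

def cov (𝓔 : Set (Set (E × E))) (A : Set E) : Set E :=
  ⋂₀ {B | B ∈ ballsOf 𝓔 univ ∧ A ⊆ B}

def diamSet (𝓔 : Set (Set (E × E))) (A : Set E) : Set (Set (E × E)) :=
  {r | r ∈ 𝓔 ∧ A ×ˢ A ⊆ r}

def radSet (𝓔 : Set (Set (E × E))) (A : Set E) : Set (Set (E × E)) :=
  {r | r ∈ 𝓔 ∧ ∃ x ∈ A, A ⊆ ball r x}

def hasFIP (𝓒 : Set (Set E)) : Prop :=
  ∀ 𝓕, 𝓕 ⊆ 𝓒 → (∀ G, G ⊆ 𝓕 → G.Finite → (⋂₀ G).Nonempty) → (⋂₀ 𝓕).Nonempty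

def isInvolutive (𝓔 : Set (Set (E × E))) : Prop := ∀ r ∈ 𝓔, relInv r ∈ 𝓔

def isReflexive (𝓔 : Set (Set (E × E))) : Prop := ∀ r ∈ 𝓔, ∀ x : E, (x, x) ∈ r

def isEndo (𝓔 : Set (Set (E × E))) (f : E → E) : Prop :=
  ∀ r ∈ 𝓔, ∀ x y : E, (x, y) ∈ r → (f x, f y) ∈ r

def olr (𝓔 : Set (Set (E × E))) (A B : Set E) : Prop :=
  ∀ x ∈ B, ∃ h : E → E, (∀ a ∈ A, h a = a) ∧ h x ∈ A ∧
    ∀ r ∈ 𝓔, ∀ u ∈ insert x A, ∀ v ∈ insert x A, (u, v) ∈ r → (h u, h v) ∈ r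

def normalS (G : Set E) (𝓡 : Set (Set (E × E))) : Prop :=
  ∀ A ∈ interB G 𝓡, A.Nonempty → radSet 𝓡 A = diamSet 𝓡 A → ∃ a : E, A = {a}

def restrRel (X : Set E) (𝓔 : Set (Set (E × E))) : Set (Set (E × E)) :=
  (fun r => r ∩ X ×ˢ X) '' 𝓔

section

variable {𝓔 : Set (Set (E × E))} {A X : Set E}

theorem subset_cov : A ⊆ cov 𝓔 A :=
  fun _ ha _ hB => hB.2 ha

theorem cov_subset_ball {r : Set (E × E)} {y : E} (hr : r ∈ 𝓔) (hA : A ⊆ ball r y) :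
    cov 𝓔 A ⊆ ball r y :=
  fun _ hu => hu (ball r y) ⟨⟨y, mem_univ y, r, hr, rfl⟩, hA⟩

theorem cov_mem_interB : cov 𝓔 A ∈ interB univ 𝓔 :=
  ⟨{B | B ∈ ballsOf 𝓔 univ ∧ A ⊆ B}, fun _ hB => hB.1, (univ_inter _).symm⟩

theorem diamSet_subset_radSet (hA : A.Nonempty) : diamSet 𝓔 A ⊆ radSet 𝓔 A := by
  rintro r ⟨hr, hAA⟩
  obtain ⟨x, hx⟩ := hA
  exact ⟨hr, x, hx, fun y hy => hAA ⟨hx, hy⟩⟩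

theorem diamSet_cov (hinv : isInvolutive 𝓔) : diamSet 𝓔 (cov 𝓔 A) = diamSet 𝓔 A := by
  refine Subset.antisymm (fun r hr => ⟨hr.1, (prod_mono subset_cov subset_cov).trans hr.2⟩) ?_
  rintro r ⟨hr, hAA⟩
  have hAC : ∀ v ∈ cov 𝓔 A, ∀ a ∈ A, (a, v) ∈ r := fun v hv a ha =>
    cov_subset_ball hr (fun b hb => hAA ⟨ha, hb⟩) hv
  refine ⟨hr, ?_⟩
  rintro ⟨u, v⟩ ⟨hu, hv⟩
  exact cov_subset_ball (hinv r hr) (fun a ha => hAC v hv a ha) hu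

theorem subset_of_mem_interB_restrRel (hA : A ∈ interB X (restrRel X 𝓔)) : A ⊆ X := by
  obtain ⟨S, -, rfl⟩ := hA
  exact inter_subset_left

theorem mem_of_mem_interB_restrRel (hA : A ∈ interB X (restrRel X 𝓔)) {y : E} (hy : y ∈ X)
    (h : ∀ z ∈ X, ∀ s ∈ 𝓔, A ⊆ ball s z → (z, y) ∈ s) : y ∈ A := by
  obtain ⟨S, hS, rfl⟩ := hA
  refine ⟨hy, fun B hB => ?_⟩
  obtain ⟨z, hz, _, ⟨s, hs, rfl⟩, rfl⟩ := hS hB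
  have hAs : X ∩ ⋂₀ S ⊆ ball s z := fun a ha => (ha.2 _ hB).1
  exact ⟨h z hz s hs hAs, hz, hy⟩

theorem restrict_mem_radSet_of_mem_radSet_cov (holr : olr 𝓔 X univ)
    (hA : A ∈ interB X (restrRel X 𝓔)) {r : Set (E × E)} (hr : r ∈ radSet 𝓔 (cov 𝓔 A)) :
    r ∩ X ×ˢ X ∈ radSet (restrRel X 𝓔) A := by
  obtain ⟨hr, x, hx, hCx⟩ := hr
  obtain ⟨h, hfix, hhxX, hhom⟩ := holr x (mem_univ x)
  have hAX := subset_of_mem_interB_restrRel hA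
  have hhxA : h x ∈ A := by
    refine mem_of_mem_interB_restrRel hA hhxX fun z hz s hs hAs => ?_
    have hzx : (z, x) ∈ s := cov_subset_ball hs hAs hx
    simpa only [hfix z hz] using
      hhom s hs z (mem_insert_of_mem _ hz) x (mem_insert _ _) hzx
  refine ⟨⟨r, hr, rfl⟩, h x, hhxA, fun a ha => ⟨?_, hAX hhxA, hAX ha⟩⟩
  simpa only [hfix a (hAX ha)] using
    hhom r hr x (mem_insert _ _) a (mem_insert_of_mem _ (hAX ha)) (hCx (subset_cov ha))

theorem radSet_cov_eq_diamSet (hinv : isInvolutive 𝓔) (holr : olr 𝓔 X univ)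
    (hA : A ∈ interB X (restrRel X 𝓔)) (hAne : A.Nonempty)
    (hrad : radSet (restrRel X 𝓔) A = diamSet (restrRel X 𝓔) A) :
    radSet 𝓔 (cov 𝓔 A) = diamSet 𝓔 (cov 𝓔 A) := by
  refine Subset.antisymm (fun r hr => ?_) (diamSet_subset_radSet (hAne.mono subset_cov))
  rw [diamSet_cov hinv]
  have hdiam := hrad ▸ restrict_mem_radSet_of_mem_radSet_cov holr hA hr
  exact ⟨hr.1, fun p hp => (hdiam.2 hp).1⟩

end

theorem olr_normal (𝓔 : Set (Set (E × E))) (X : Set E)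
    (hinv : isInvolutive 𝓔) (hnorm : normalS univ 𝓔) (holr : olr 𝓔 X univ) :
    normalS X (restrRel X 𝓔) := by
  intro A hA hAne hrad
  obtain ⟨a, ha⟩ := hnorm (cov 𝓔 A) cov_mem_interB (hAne.mono subset_cov)
    (radSet_cov_eq_diamSet hinv holr hA hAne hrad)
  exact ⟨a, hAne.subset_singleton_iff.1 (ha ▸ subset_cov)⟩
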